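/- arXiv:2512.01985 — 6 statements merged into one kernel-verified Lean document; each statement's English description precedes it below -/
import Mathlib

section
/- Let T be a labeled rooted tree and β ∈ ℝ. Then (i) for every pruning P of T, Q(T; β) ≤ c_β(P), and (ii) there exists a pruning P̃ of T such that Q(T; β) = c_β(P̃). -/
/-- A finitely-branching rooted tree whose every node carries two real labels
`a` and `b` (representing the incremental informations `ΔI_X` and `ΔI_Y`). -/
inductive LTree : Type where
  | node (a b : ℝ) (k : ℕ) (children : Fin k → LTree) : LTree

/-- The Q-function from Q-tree search:
`Q(T; β) = 0` if the root of `T` has no children, and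
`Q(T; β) = min (a(r) − β·b(r) + Σᵢ Q(Tᵢ; β)) 0` if the root `r` of `T` has
child subtrees `T₁, …, T_k` with `k ≥ 1`. -/
noncomputable def Qfun : LTree → ℝ → ℝ
  | .node a b k c, β =>
      if k = 0 then 0 else min (a - β * b + ∑ i : Fin k, Qfun (c i) β) 0

/-- Every node of the tree satisfies the predicate `p` on its label pair. -/
def ForallNodes (p : ℝ → ℝ → Prop) : LTree → Prop
  | .node a b k c => p a b ∧ ∀ i : Fin k, ForallNodes p (c i)

/-- `IsPruning P T` : `P` is a pruning of `T`.  The single-node tree carrying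
the root labels of `T` is a pruning of `T`; and if `T` has root `r` with child
subtrees `T₁, …, T_k` (`k ≥ 1`) and `Pᵢ` is a pruning of `Tᵢ` for each `i`,
then the tree with root `r` and child subtrees `P₁, …, P_k` is a pruning of `T`. -/
inductive IsPruning : LTree → LTree → Prop where
  | root (a b : ℝ) (k : ℕ) (c : Fin k → LTree) (f0 : Fin 0 → LTree) :
      IsPruning (.node a b 0 f0) (.node a b k c)
  | step (a b : ℝ) (k : ℕ) (hk : 0 < k) (c P : Fin k → LTree)
      (h : ∀ i, IsPruning (P i) (c i)) :
      IsPruning (.node a b k P) (.node a b k c)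

/-- `c_β(P)` : the sum of `a(s) − β·b(s)` over the interior nodes `s` of `P`
(nodes with at least one child). -/
noncomputable def cost (β : ℝ) : LTree → ℝ
  | .node a b k c =>
      if k = 0 then 0 else (a - β * b) + ∑ i : Fin k, cost β (c i)

/-!
`Q(T; β)` is the value of the dynamic program that at each interior node either stops
(cost `0`, the single-node pruning) or expands, paying `a − β·b` plus the optimal costs of
the child subtrees. By induction on the tree, this value bounds the cost of every pruning and
is attained by expanding exactly where the expansion term is `≤ 0`.
-/

namespace LTree

variable {β a b : ℝ} {k : ℕ}

theorem Qfun_leaf (c : Fin 0 → LTree) : Qfun (.node a b 0 c) β = 0 := by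
  simp [Qfun]

theorem Qfun_node_of_ne_zero (hk : k ≠ 0) (c : Fin k → LTree) :
    Qfun (.node a b k c) β = min (a - β * b + ∑ i, Qfun (c i) β) 0 := by
  simp [Qfun, hk]

theorem cost_leaf (c : Fin 0 → LTree) : cost β (.node a b 0 c) = 0 := by
  simp [cost]

theorem cost_node_of_ne_zero (hk : k ≠ 0) (c : Fin k → LTree) :
    cost β (.node a b k c) = a - β * b + ∑ i, cost β (c i) := by
  simp [cost, hk]

theorem Qfun_nonpos (T : LTree) : Qfun T β ≤ 0 := by
  obtain ⟨a, b, k, c⟩ := T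
  rcases eq_or_ne k 0 with rfl | hk
  · exact (Qfun_leaf c).le
  · rw [Qfun_node_of_ne_zero hk]
    exact min_le_right _ _

theorem Qfun_le_cost_of_isPruning {P T : LTree} (hP : IsPruning P T) : Qfun T β ≤ cost β P := by
  induction hP with
  | root =>
    rw [cost_leaf]
    exact Qfun_nonpos _
  | step a b k hk c P _ ih =>
    rw [Qfun_node_of_ne_zero hk.ne', cost_node_of_ne_zero hk.ne']
    calc min (a - β * b + ∑ i, Qfun (c i) β) 0
        ≤ a - β * b + ∑ i, Qfun (c i) β := min_le_left _ _
      _ ≤ a - β * b + ∑ i, cost β (P i) := by gcongr with i; exact ih i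

theorem exists_isPruning_cost_eq_Qfun (T : LTree) (β : ℝ) :
    ∃ P, IsPruning P T ∧ cost β P = Qfun T β := by
  induction T with
  | node a b k c ih =>
    rcases eq_or_ne k 0 with rfl | hk
    · exact ⟨.node a b 0 c, .root a b 0 c c, by rw [cost_leaf, Qfun_leaf]⟩
    rw [Qfun_node_of_ne_zero hk]
    by_cases hexpand : a - β * b + ∑ i, Qfun (c i) β ≤ 0
    · choose P hP hcost using ih
      refine ⟨.node a b k P, .step a b k (Nat.pos_of_ne_zero hk) c P hP, ?_⟩
      simp only [cost_node_of_ne_zero hk, hcost, min_eq_left hexpand]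
    · refine ⟨.node a b 0 Fin.elim0, .root a b k c _, ?_⟩
      rw [cost_leaf, min_eq_right (not_le.mp hexpand).le]

end LTree

/-- **Lemma 1 of Q-tree search.**  For every labeled rooted tree `T` and every
`β ∈ ℝ`: (i) `Q(T; β) ≤ c_β(P)` for every pruning `P` of `T`, and (ii) there
exists a pruning `P̃` of `T` with `Q(T; β) = c_β(P̃)`. -/
theorem Qfun_le_cost_and_attained (T : LTree) (β : ℝ) :
    (∀ P : LTree, IsPruning P T → Qfun T β ≤ cost β P) ∧
    (∃ P : LTree, IsPruning P T ∧ Qfun T β = cost β P) := by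
  obtain ⟨P, hP, hcost⟩ := LTree.exists_isPruning_cost_eq_Qfun T β
  exact ⟨fun _ hP' => LTree.Qfun_le_cost_of_isPruning hP', P, hP, hcost.symm⟩
end

section
/- Let T be a labeled rooted tree and β ∈ ℝ. Then Q(T; β) is the least element of the set {c_β(P) : P a pruning of T}; that is, Q(T; β) = min{c_β(P) : P a pruning of T}. (Interpreting T as the finest-resolution tree, this says the root Q-value equals the minimum over all trees of I_X − β·I_Y.) -/
/-!
A pruning of `T` either stops at the root, at cost `0`, or keeps the root and prunes
each child subtree independently, at cost `a − β·b` plus the children's costs. The cost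
is additive over the children, so the cheapest pruning of the second kind uses a cheapest
pruning of every child; by induction these cost `Q(Tᵢ; β)`, and the cheaper of the two
options is exactly the recursion defining `Q(T; β)`.
-/

theorem Qfun_nonpos (T : LTree) (β : ℝ) : Qfun T β ≤ 0 := by
  cases T with
  | node a b k c =>
    unfold Qfun
    split_ifs
    exacts [le_rfl, min_le_right _ _]

theorem cost_leaf (β a b : ℝ) (c : Fin 0 → LTree) : cost β (.node a b 0 c) = 0 := by
  simp [cost]

theorem Qfun_le_cost_of_isPruning {P T : LTree} (β : ℝ) (h : IsPruning P T) :
    Qfun T β ≤ cost β P := by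
  induction h with
  | root a b k c f0 =>
    rw [cost_leaf]
    exact Qfun_nonpos _ β
  | step a b k hk c P _ ih =>
    simp only [Qfun, cost, if_neg hk.ne']
    calc min (a - β * b + ∑ i, Qfun (c i) β) 0
        ≤ a - β * b + ∑ i, Qfun (c i) β := min_le_left _ _
      _ ≤ a - β * b + ∑ i, cost β (P i) := by gcongr with i; exact ih i

theorem exists_isPruning_cost_eq_Qfun (T : LTree) (β : ℝ) :
    ∃ P, IsPruning P T ∧ cost β P = Qfun T β := by
  induction T with
  | node a b k c ih =>
    choose P hP hcost using ih
    rcases Nat.eq_zero_or_pos k with rfl | hk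
    · exact ⟨_, .root a b 0 c c, by simp [Qfun, cost]⟩
    rcases le_total (a - β * b + ∑ i, Qfun (c i) β) 0 with hexpand | hstop
    · refine ⟨.node a b k P, .step a b k hk c P hP, ?_⟩
      simp only [Qfun, cost, if_neg hk.ne', min_eq_left hexpand, hcost]
    · refine ⟨.node a b 0 Fin.elim0, .root a b k c _, ?_⟩
      rw [cost_leaf]
      simp only [Qfun, if_neg hk.ne', min_eq_right hstop]

/-- **Proposition 1.**  The root Q-value is the least element of the set of
values `c_β(P)` over all prunings `P` of `T`; i.e.
`Q(T; β) = min {c_β(P) : P a pruning of T}`. -/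
theorem Qfun_isLeast_cost (T : LTree) (β : ℝ) :
    IsLeast {v : ℝ | ∃ P : LTree, IsPruning P T ∧ v = cost β P} (Qfun T β) := by
  refine ⟨?_, ?_⟩
  · obtain ⟨P, hP, hcost⟩ := exists_isPruning_cost_eq_Qfun T β
    exact ⟨P, hP, hcost.symm⟩
  · rintro v ⟨P, hP, rfl⟩
    exact Qfun_le_cost_of_isPruning β hP
end

section
/- Let T be a labeled rooted tree all of whose node labels satisfy b(t) ≥ 0, and suppose Q(T; β₁) = 0 for some β₁ ≥ 0. Then Q(T; β₂) = 0 for every β₂ with 0 ≤ β₂ ≤ β₁. (Hence the Q-critical value of a node partitions the nonnegative real line into an interval on which Q vanishes and an interval on which Q is negative.) -/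
theorem Qfun_antitone {T : LTree} (hb : ForallNodes (fun _ b => 0 ≤ b) T) :
    Antitone (Qfun T) := by
  intro β₂ β₁ h
  induction T with
  | node a b k c ih =>
    obtain ⟨hb_root, hb_children⟩ := hb
    rw [Qfun, Qfun]
    split
    · exact le_rfl
    · gcongr with i
      exact ih i (hb_children i)

theorem Qfun_eq_zero_of_le_general (T : LTree)
    (hb : ForallNodes (fun _ b => 0 ≤ b) T)
    (β₁ : ℝ) (hQ : Qfun T β₁ = 0) :
    ∀ β₂ : ℝ, 0 ≤ β₂ → β₂ ≤ β₁ → Qfun T β₂ = 0 := by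
  intro β₂ _ h
  exact le_antisymm (Qfun_nonpos T β₂) (hQ ▸ Qfun_antitone hb h)

/-- If all node labels of `T` satisfy `b(t) ≥ 0` and `Q(T; β₁) = 0` for some
`β₁ ≥ 0`, then `Q(T; β₂) = 0` for every `0 ≤ β₂ ≤ β₁`. -/
theorem Qfun_eq_zero_of_le (T : LTree)
    (hb : ForallNodes (fun _ b => 0 ≤ b) T)
    (β₁ : ℝ) (hβ₁ : 0 ≤ β₁) (hQ : Qfun T β₁ = 0) :
    ∀ β₂ : ℝ, 0 ≤ β₂ → β₂ ≤ β₁ → Qfun T β₂ = 0 :=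
  Qfun_eq_zero_of_le_general T hb β₁ hQ
end

section
/- Let A be an m × n real matrix with the tree-constraint row structure, and let c ∈ ℝⁿ. Then the linear program min{cᵀz : A z ≤ 0, 0 ≤ z ≤ 1} attains its minimum at an integer point: there exists z* ∈ ℝⁿ with every coordinate of z* in {0, 1}, A z* ≤ 0 (componentwise), 0 ≤ z* ≤ 1, and cᵀz* ≤ cᵀz for every z ∈ ℝⁿ satisfying A z ≤ 0 and 0 ≤ z ≤ 1. (Hence the integer program and its linear-programming relaxation have equal optimal values.) -/
/-!
Threshold rounding. If `w` is feasible, then for every `t` the `0/1` vector `j ↦ [t ≤ w j]` is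
feasible too, because each constraint reads `w j₁ ≤ w j₂` and is preserved by any monotone map.
By the layer-cake formula `w j = ∫₀¹ [t ≤ w j] dt`, the cost of `w` is the average over
`t ∈ [0, 1]` of the costs of these rounded vectors, so it is at least the least cost of a
feasible `0/1` vector, of which there are finitely many.
-/

/-- `A` has the tree-constraint row structure: every row of `A` contains
exactly one entry equal to `1` and exactly one entry equal to `-1`, lying in
two distinct columns, and all of its other entries equal `0`. -/
def TreeRowStructure {m n : ℕ} (A : Matrix (Fin m) (Fin n) ℝ) : Prop :=
  ∀ i : Fin m, ∃ j₁ j₂ : Fin n, j₁ ≠ j₂ ∧ A i j₁ = 1 ∧ A i j₂ = -1 ∧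
    ∀ j : Fin n, j ≠ j₁ → j ≠ j₂ → A i j = 0

open MeasureTheory Set Matrix

theorem integral_ite_le_eq {a : ℝ} (ha : a ∈ Icc (0 : ℝ) 1) :
    ∫ t in (0 : ℝ)..1, (if t ≤ a then (1 : ℝ) else 0) = a := by
  have : (fun t : ℝ => if t ≤ a then (1 : ℝ) else 0) = (Iic a).indicator 1 := by
    ext t; simp [indicator, mem_Iic]
  rw [this, intervalIntegral.integral_of_le zero_le_one, integral_indicator_one measurableSet_Iic,
    measureReal_restrict_apply measurableSet_Iic, Iic_inter_Ioc_of_le ha.2, Real.volume_real_Ioc]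
  simp [ha.1]

theorem antitone_ite_le (a : ℝ) : Antitone fun t : ℝ => if t ≤ a then (1 : ℝ) else 0 := by
  intro s t hst
  by_cases ht : t ≤ a
  · simp [ht, hst.trans ht]
  · by_cases hs : s ≤ a <;> simp [hs, ht]

theorem monotone_ite_le (t : ℝ) : Monotone fun x : ℝ => if t ≤ x then (1 : ℝ) else 0 := by
  intro x y hxy
  by_cases hx : t ≤ x
  · simp [hx, hx.trans hxy]
  · by_cases hy : t ≤ y <;> simp [hx, hy]

theorem intervalIntegrable_sum_mul_ite_le {ι : Type*} [Fintype ι] (c w : ι → ℝ) :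
    IntervalIntegrable (fun t => ∑ j, c j * if t ≤ w j then (1 : ℝ) else 0) volume 0 1 := by
  simpa only [Finset.sum_fn] using IntervalIntegrable.sum Finset.univ fun j _ =>
    ((antitone_ite_le (w j)).intervalIntegrable (μ := volume) (a := 0) (b := 1)).const_mul (c j)

theorem sum_mul_eq_integral_sum_mul_ite_le {ι : Type*} [Fintype ι] (c w : ι → ℝ)
    (hw : ∀ j, w j ∈ Icc (0 : ℝ) 1) :
    ∑ j, c j * w j = ∫ t in (0 : ℝ)..1, ∑ j, c j * if t ≤ w j then 1 else 0 := by
  rw [intervalIntegral.integral_finsetSum fun j _ =>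
    ((antitone_ite_le (w j)).intervalIntegrable).const_mul (c j)]
  simp only [intervalIntegral.integral_const_mul, integral_ite_le_eq (hw _)]

theorem le_sum_mul_of_forall_le_sum_mul_ite_le {ι : Type*} [Fintype ι] {c w : ι → ℝ} {m : ℝ}
    (hw : ∀ j, w j ∈ Icc (0 : ℝ) 1) (h : ∀ t, m ≤ ∑ j, c j * if t ≤ w j then 1 else 0) :
    m ≤ ∑ j, c j * w j := by
  rw [sum_mul_eq_integral_sum_mul_ite_le c w hw]
  simpa using intervalIntegral.integral_mono_on zero_le_one intervalIntegrable_const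
    (intervalIntegrable_sum_mul_ite_le c w) fun t _ => h t

theorem TreeRowStructure.exists_mulVec_eq_sub {m n : ℕ} {A : Matrix (Fin m) (Fin n) ℝ}
    (hA : TreeRowStructure A) (i : Fin m) : ∃ j₁ j₂, ∀ w, (A *ᵥ w) i = w j₁ - w j₂ := by
  obtain ⟨j₁, j₂, hne, h₁, h₂, h₀⟩ := hA i
  refine ⟨j₁, j₂, fun w => ?_⟩
  rw [mulVec, dotProduct, Finset.sum_eq_add j₁ j₂ hne (fun j _ hj => by simp [h₀ j hj.1 hj.2])
    (by simp) (by simp), h₁, h₂]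
  ring

theorem TreeRowStructure.mulVec_comp_nonpos {m n : ℕ} {A : Matrix (Fin m) (Fin n) ℝ}
    (hA : TreeRowStructure A) {w : Fin n → ℝ} (hw : ∀ i, (A *ᵥ w) i ≤ 0) {f : ℝ → ℝ}
    (hf : Monotone f) (i : Fin m) : (A *ᵥ (f ∘ w)) i ≤ 0 := by
  obtain ⟨j₁, j₂, hA⟩ := hA.exists_mulVec_eq_sub i
  have := hw i
  rw [hA] at this ⊢
  exact sub_nonpos.2 (hf (sub_nonpos.1 this))

theorem finite_setOf_forall_eq_zero_or_eq_one (ι : Type*) [Finite ι] :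
    {z : ι → ℝ | ∀ j, z j = 0 ∨ z j = 1}.Finite := by
  convert Set.Finite.pi (t := fun _ : ι => ({0, 1} : Set ℝ)) fun _ => by simp
  ext z; simp

/-- For an `m × n` real matrix `A` with the tree-constraint row structure and
any cost vector `c`, the linear program `min {cᵀz : A z ≤ 0, 0 ≤ z ≤ 1}`
attains its minimum at an integer (in fact `{0,1}`-valued) point. -/
theorem lp_attains_min_at_integer_point
    {m n : ℕ} (A : Matrix (Fin m) (Fin n) ℝ) (hA : TreeRowStructure A)
    (c : Fin n → ℝ) :
    ∃ z : Fin n → ℝ, (∀ j, z j = 0 ∨ z j = 1) ∧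
      (∀ i, A.mulVec z i ≤ 0) ∧ (∀ j, 0 ≤ z j ∧ z j ≤ 1) ∧
      ∀ w : Fin n → ℝ, (∀ i, A.mulVec w i ≤ 0) → (∀ j, 0 ≤ w j ∧ w j ≤ 1) →
        ∑ j, c j * z j ≤ ∑ j, c j * w j := by
  obtain ⟨z, ⟨hz01, hzA⟩, hzmin⟩ := Set.exists_min_image
    {z | (∀ j, z j = 0 ∨ z j = 1) ∧ ∀ i, (A *ᵥ z) i ≤ 0} (fun z => ∑ j, c j * z j)
    ((finite_setOf_forall_eq_zero_or_eq_one (Fin n)).subset fun _ hz => hz.1) ⟨0, by simp⟩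
  refine ⟨z, hz01, hzA, fun j => by rcases hz01 j with h | h <;> simp [h], fun w hwA hw => ?_⟩
  refine le_sum_mul_of_forall_le_sum_mul_ite_le hw fun t => hzmin _ ⟨fun j => ?_, ?_⟩
  · by_cases h : t ≤ w j <;> simp [h]
  · exact hA.mulVec_comp_nonpos hwA (monotone_ite_le t)
end

section
/- Let A be an m × n real matrix with the tree-constraint row structure, and let P = {z ∈ ℝⁿ : A z ≤ 0, 0 ≤ z ≤ 1}. Then P is an integral polytope: every extreme point of P has all of its coordinates in {0, 1}. -/
open Set

theorem eq_zero_of_sub_mem_of_add_mem_of_mem_extremePoints {𝕜 E : Type*} [Field 𝕜]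
    [LinearOrder 𝕜] [IsStrictOrderedRing 𝕜] [AddCommGroup E] [Module 𝕜 E] {A : Set E} {x v : E}
    (hx : x ∈ A.extremePoints 𝕜) (hsub : x - v ∈ A) (hadd : x + v ∈ A) : v = 0 := by
  have : Invertible (2 : 𝕜) := invertibleOfNonzero two_ne_zero
  simpa using hx.2 hsub hadd (mem_openSegment_sub_add x v)

theorem TreeRowStructure.exists_mulVec_apply_eq_sub {m n : ℕ} {A : Matrix (Fin m) (Fin n) ℝ}
    (hA : TreeRowStructure A) (i : Fin m) :
    ∃ j₁ j₂ : Fin n, ∀ w : Fin n → ℝ, A.mulVec w i = w j₁ - w j₂ := by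
  obtain ⟨j₁, j₂, hne, h₁, h₂, h₀⟩ := hA i
  refine ⟨j₁, j₂, fun w => ?_⟩
  rw [Matrix.mulVec, dotProduct, ← Finset.sum_subset (Finset.subset_univ {j₁, j₂})
    fun k _ hk => by simp_all, Finset.sum_pair hne, h₁, h₂]
  ring

section OrderPolytope

variable {ι κ : Type*}

def orderPolytope (p q : κ → ι) : Set (ι → ℝ) :=
  {w | (∀ i, w (p i) ≤ w (q i)) ∧ ∀ j, w j ∈ Icc 0 1}

noncomputable def fractionalIndicator (z : ι → ℝ) : ι → ℝ :=
  {k | z k ∈ Ioo 0 1}.indicator 1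

theorem fractionalIndicator_apply_of_mem {z : ι → ℝ} {k : ι} (hk : z k ∈ Ioo 0 1) :
    fractionalIndicator z k = 1 :=
  indicator_of_mem (s := {k | z k ∈ Ioo 0 1}) hk 1

theorem fractionalIndicator_apply_of_notMem {z : ι → ℝ} {k : ι} (hk : z k ∉ Ioo 0 1) :
    fractionalIndicator z k = 0 :=
  indicator_of_notMem (s := {k | z k ∈ Ioo 0 1}) hk 1

theorem add_smul_fractionalIndicator_mem_orderPolytope {p q : κ → ι} {z : ι → ℝ}
    (hz : z ∈ orderPolytope p q) {t : ℝ}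
    (ht : ∀ k, z k ∈ Ioo 0 1 → |t| ≤ z k ∧ |t| ≤ 1 - z k) :
    z + t • fractionalIndicator z ∈ orderPolytope p q := by
  obtain ⟨hle, hbox⟩ := hz
  have habs := abs_le.mp (le_refl |t|)
  refine ⟨fun i => ?_, fun k => ?_⟩
  · simp only [Pi.add_apply, Pi.smul_apply, smul_eq_mul]
    have hpq := hle i
    by_cases hp : z (p i) ∈ Ioo 0 1 <;> by_cases hq : z (q i) ∈ Ioo 0 1
    · rw [fractionalIndicator_apply_of_mem hp, fractionalIndicator_apply_of_mem hq]
      linarith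
    · have : 1 ≤ z (q i) := by
        by_contra! h
        exact hq ⟨hp.1.trans_le hpq, h⟩
      rw [fractionalIndicator_apply_of_mem hp, fractionalIndicator_apply_of_notMem hq]
      linarith [ht _ hp]
    · have : z (p i) ≤ 0 := by
        by_contra! h
        exact hp ⟨h, hpq.trans_lt hq.2⟩
      rw [fractionalIndicator_apply_of_notMem hp, fractionalIndicator_apply_of_mem hq]
      linarith [ht _ hq]
    · rw [fractionalIndicator_apply_of_notMem hp, fractionalIndicator_apply_of_notMem hq]
      linarith
  · simp only [Pi.add_apply, Pi.smul_apply, smul_eq_mul]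
    by_cases hk : z k ∈ Ioo 0 1
    · rw [fractionalIndicator_apply_of_mem hk, mul_one]
      have := ht k hk
      constructor <;> linarith
    · rw [fractionalIndicator_apply_of_notMem hk, mul_zero, add_zero]
      exact hbox k

theorem exists_pos_le_min_of_mem_Ioo [Finite ι] (z : ι → ℝ) :
    ∃ ε > 0, ∀ k, z k ∈ Ioo 0 1 → ε ≤ z k ∧ ε ≤ 1 - z k := by
  rcases isEmpty_or_nonempty ι with hι | hι
  · exact ⟨1, one_pos, fun k => isEmptyElim k⟩
  let gap : ι → ℝ := fun k => if z k ∈ Ioo 0 1 then min (z k) (1 - z k) else 1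
  have gap_of_mem {k} (hk : z k ∈ Ioo 0 1) : gap k = min (z k) (1 - z k) := if_pos hk
  have gap_pos (k) : 0 < gap k := by
    by_cases hk : z k ∈ Ioo 0 1
    · rw [gap_of_mem hk]
      exact lt_min hk.1 (sub_pos.2 hk.2)
    · exact (if_neg hk).trans_gt one_pos
  obtain ⟨k₀, hk₀⟩ := Finite.exists_min gap
  refine ⟨gap k₀, gap_pos k₀, fun k hk => ?_⟩
  rw [← le_min_iff, ← gap_of_mem hk]
  exact hk₀ k

theorem eq_zero_or_eq_one_of_mem_extremePoints_orderPolytope [Finite ι] {p q : κ → ι}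
    {z : ι → ℝ} (hz : z ∈ (orderPolytope p q).extremePoints ℝ) (j : ι) : z j = 0 ∨ z j = 1 := by
  by_contra! hj
  have hbox := hz.1.2 j
  have hjfrac : z j ∈ Ioo 0 1 := ⟨hbox.1.lt_of_ne' hj.1, hbox.2.lt_of_ne hj.2⟩
  obtain ⟨ε, hε, hεz⟩ := exists_pos_le_min_of_mem_Ioo z
  have hmem (t : ℝ) (ht : |t| = ε) : z + t • fractionalIndicator z ∈ orderPolytope p q :=
    add_smul_fractionalIndicator_mem_orderPolytope hz.1 fun k hk => ht ▸ hεz k hk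
  have hsub : z - ε • fractionalIndicator z ∈ orderPolytope p q := by
    simpa [sub_eq_add_neg] using hmem (-ε) (by simp [abs_of_pos hε])
  have hzero := congrFun (eq_zero_of_sub_mem_of_add_mem_of_mem_extremePoints hz hsub
    (hmem ε (abs_of_pos hε))) j
  simp [fractionalIndicator_apply_of_mem hjfrac, hε.ne'] at hzero

end OrderPolytope

/-- The polyhedron `P = {z : A z ≤ 0, 0 ≤ z ≤ 1}` of an `m × n` real matrix
`A` with the tree-constraint row structure is integral: every extreme point
of `P` has all of its coordinates in `{0, 1}`. -/
theorem tree_polyhedron_integral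
    {m n : ℕ} (A : Matrix (Fin m) (Fin n) ℝ) (hA : TreeRowStructure A) :
    ∀ z ∈ Set.extremePoints ℝ
      {w : Fin n → ℝ | (∀ i, A.mulVec w i ≤ 0) ∧ ∀ j, 0 ≤ w j ∧ w j ≤ 1},
      ∀ j, z j = 0 ∨ z j = 1 := by
  choose p q hpq using hA.exists_mulVec_apply_eq_sub
  have hP : {w : Fin n → ℝ | (∀ i, A.mulVec w i ≤ 0) ∧ ∀ j, 0 ≤ w j ∧ w j ≤ 1} =
      orderPolytope p q := by
    ext w
    simp [orderPolytope, hpq]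
  rw [hP]
  exact fun z hz => eq_zero_or_eq_one_of_mem_extremePoints_orderPolytope hz
end

section
/- Let T be a labeled rooted tree all of whose node labels satisfy a(s) ≥ b(s) ≥ 0. For a pruning P of T define f(P) = Σ_{s interior node of P} a(s) and g(P) = Σ_{s interior node of P} b(s). Let D ≥ 0 and assume the primal problem is feasible: some pruning P₀ of T satisfies g(P₀) ≥ D. Then the following are equivalent: (i) strong duality holds, i.e., there exists β ≥ 0 such that min over all prunings P of T of (f(P) + β·(D − g(P))) equals min{f(P) : P a pruning of T with g(P) ≥ D}; (ii) there exist β ≥ 0 and a pruning P* of T such that P* minimizes f(P) − β·g(P) over all prunings of T and g(P*) = D. -/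
/-- `f(P)` : sum of `a(s)` over the interior nodes of `P` (retained `I_X`). -/
noncomputable def sumA : LTree → ℝ
  | .node a _ k c => if k = 0 then 0 else a + ∑ i : Fin k, sumA (c i)

/-- `g(P)` : sum of `b(s)` over the interior nodes of `P` (retained `I_Y`). -/
noncomputable def sumB : LTree → ℝ
  | .node _ b k c => if k = 0 then 0 else b + ∑ i : Fin k, sumB (c i)

/-!
Complementary slackness. If `v` is both the least Lagrangian value and the least primal value,
a primal optimum `P` has Lagrangian value at most `f P = v`, so `β (D - g P) = 0` and `P` minimizes
`f - β g`. For `β > 0` this forces `g P = D`; for `β = 0` the root pruning gives `v ≤ 0`, and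
`D ≤ g P ≤ f P = v ≤ 0 ≤ D`. Conversely a minimizer of `f - β g` with `g = D` attains both minima.
-/

section Lagrangian

variable {α : Type*} {S : α → Prop} {f g : α → ℝ} {β D : ℝ}

theorem isLeast_lagrangian_of_minimizer {x : α} (hx : S x)
    (hmin : ∀ y, S y → f x - β * g x ≤ f y - β * g y) (hg : g x = D) :
    IsLeast {w | ∃ y, S y ∧ w = f y + β * (D - g y)} (f x) := by
  subst hg
  refine ⟨⟨x, hx, by ring⟩, ?_⟩
  rintro w ⟨y, hy, rfl⟩
  linarith [hmin y hy]

theorem isLeast_primal_of_minimizer (hβ : 0 ≤ β) {x : α} (hx : S x)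
    (hmin : ∀ y, S y → f x - β * g x ≤ f y - β * g y) (hg : g x = D) :
    IsLeast {w | ∃ y, S y ∧ D ≤ g y ∧ w = f y} (f x) := by
  refine ⟨⟨x, hx, hg.ge, rfl⟩, ?_⟩
  rintro w ⟨y, hy, hDy, rfl⟩
  have hpenalty : 0 ≤ β * (g y - g x) := mul_nonneg hβ (by linarith)
  linarith [hmin y hy]

theorem minimizer_of_isLeast_lagrangian {v : ℝ}
    (hv : IsLeast {w | ∃ y, S y ∧ w = f y + β * (D - g y)} v)
    {x : α} (hx : v = f x + β * (D - g x)) :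
    ∀ y, S y → f x - β * g x ≤ f y - β * g y := by
  intro y hy
  linarith [hv.2 ⟨y, hy, rfl⟩]

theorem mul_sub_eq_zero_of_isLeast_lagrangian (hβ : 0 ≤ β) {v : ℝ}
    (hv : IsLeast {w | ∃ y, S y ∧ w = f y + β * (D - g y)} v)
    {x : α} (hx : S x) (hDx : D ≤ g x) (hfx : f x = v) :
    β * (D - g x) = 0 := by
  have hle : v ≤ f x + β * (D - g x) := hv.2 ⟨x, hx, rfl⟩
  have hnonpos : β * (D - g x) ≤ 0 := mul_nonpos_of_nonneg_of_nonpos hβ (by linarith)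
  linarith

end Lagrangian

theorem ForallNodes.mono {p q : ℝ → ℝ → Prop} (hpq : ∀ a b, p a b → q a b) :
    ∀ {T : LTree}, ForallNodes p T → ForallNodes q T
  | .node a b _ _, ⟨hab, hc⟩ => ⟨hpq a b hab, fun i => ForallNodes.mono hpq (hc i)⟩

theorem IsPruning.forallNodes {p : ℝ → ℝ → Prop} {P T : LTree} (h : IsPruning P T)
    (hT : ForallNodes p T) : ForallNodes p P := by
  induction h with
  | root => exact ⟨hT.1, fun i => i.elim0⟩
  | step _ _ _ _ _ _ _ ih => exact ⟨hT.1, fun i => ih i (hT.2 i)⟩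

theorem sumB_le_sumA : ∀ {P : LTree}, ForallNodes (fun a b => b ≤ a) P → sumB P ≤ sumA P
  | .node a b k c, ⟨hba, hc⟩ => by
    have hsum : ∑ i, sumB (c i) ≤ ∑ i, sumA (c i) :=
      Finset.sum_le_sum fun i _ => sumB_le_sumA (hc i)
    simp only [sumA, sumB]
    split_ifs
    · rfl
    · linarith

theorem exists_isPruning_sumA_eq_zero : ∀ T : LTree, ∃ P, IsPruning P T ∧ sumA P = 0
  | .node a b k c => ⟨.node a b 0 Fin.elim0, .root a b k c Fin.elim0, by simp [sumA]⟩

theorem strong_duality_characterization_general (T : LTree)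
    (hlab : ForallNodes (fun a b => b ≤ a ∧ 0 ≤ b) T)
    (D : ℝ) (hD : 0 ≤ D) :
    (∃ β : ℝ, 0 ≤ β ∧ ∃ v : ℝ,
        IsLeast {w : ℝ | ∃ P : LTree, IsPruning P T ∧
          w = sumA P + β * (D - sumB P)} v ∧
        IsLeast {w : ℝ | ∃ P : LTree, IsPruning P T ∧ D ≤ sumB P ∧
          w = sumA P} v) ↔
    (∃ β : ℝ, 0 ≤ β ∧ ∃ Pstar : LTree, IsPruning Pstar T ∧
        (∀ P : LTree, IsPruning P T →
          sumA Pstar - β * sumB Pstar ≤ sumA P - β * sumB P) ∧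
        sumB Pstar = D) := by
  constructor
  · rintro ⟨β, hβ, v, hlagr, ⟨P, hP, hDP, hPv⟩, -⟩
    have hslack := mul_sub_eq_zero_of_isLeast_lagrangian hβ hlagr hP hDP hPv.symm
    have hgP : sumB P = D := by
      rcases mul_eq_zero.1 hslack with rfl | h
      · obtain ⟨R, hR, hRA⟩ := exists_isPruning_sumA_eq_zero T
        have hv : v ≤ 0 := hlagr.2 ⟨R, hR, by rw [hRA]; ring⟩
        have hBA : sumB P ≤ sumA P :=
          sumB_le_sumA ((hP.forallNodes hlab).mono fun _ _ h => h.1)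
        linarith
      · linarith
    exact ⟨β, hβ, P, hP,
      minimizer_of_isLeast_lagrangian hlagr (by rw [hgP, ← hPv]; ring), hgP⟩
  · rintro ⟨β, hβ, P, hP, hmin, hgP⟩
    exact ⟨β, hβ, sumA P, isLeast_lagrangian_of_minimizer hP hmin hgP,
      isLeast_primal_of_minimizer hβ hP hmin hgP⟩

/-- **Characterization of strong duality in the IB tree problem**
(Theorem 4).  Suppose every node label of `T` satisfies `a(s) ≥ b(s) ≥ 0`,
`D ≥ 0`, and the primal problem is feasible (some pruning `P₀` of `T` has
`g(P₀) ≥ D`).  Then strong duality holds — i.e. there is a `β ≥ 0` for which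
the minimum over prunings `P` of the Lagrangian `f(P) + β (D − g(P))` equals
the minimum of `f(P)` over feasible prunings — if and only if there exist a
`β ≥ 0` and a pruning `P*` of `T` minimizing `f − β·g` over all prunings with
`g(P*) = D` exactly. -/
theorem strong_duality_characterization (T : LTree)
    (hlab : ForallNodes (fun a b => b ≤ a ∧ 0 ≤ b) T)
    (D : ℝ) (hD : 0 ≤ D)
    (hfeas : ∃ P₀ : LTree, IsPruning P₀ T ∧ D ≤ sumB P₀) :
    (∃ β : ℝ, 0 ≤ β ∧ ∃ v : ℝ,
        IsLeast {w : ℝ | ∃ P : LTree, IsPruning P T ∧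
          w = sumA P + β * (D - sumB P)} v ∧
        IsLeast {w : ℝ | ∃ P : LTree, IsPruning P T ∧ D ≤ sumB P ∧
          w = sumA P} v) ↔
    (∃ β : ℝ, 0 ≤ β ∧ ∃ Pstar : LTree, IsPruning Pstar T ∧
        (∀ P : LTree, IsPruning P T →
          sumA Pstar - β * sumB Pstar ≤ sumA P - β * sumB P) ∧
        sumB Pstar = D) :=
  strong_duality_characterization_general T hlab D hD
end
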